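/- Let S be a unital epsilon-strongly G-graded ring and e ∈ B(E_G)* an epsilon-central element (a minimal element of the boolean semigroup of the ε_g's which is central in S). Then for all g, h ∈ N(e), (e S_g)(e S_h) = e S_{gh}; in particular, eS = ⊕_{g∈N(e)} e S_g is a strongly N(e)-graded ring with identity e. -/

import Mathlib

/-!
Each `ε g` lies in `S_0` and is a two-sided unit of `S_g S_{-g}`, which `S_0` stabilises on both
sides; hence `ε g w = ε g w ε g = w ε g` for `w ∈ S_0`. So the `ε g` are commuting idempotents and
the epsilon-central `e` is a central idempotent, for which `(e S)(e T) = e (S T)`. It remains to see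
`e S_{g+h} ⊆ e (S_g S_h)`: since `e = e ε g`, this follows from
`ε g S_{g+h} ⊆ S_g S_{-g} S_{g+h} ⊆ S_g S_h`.
-/

open Pointwise

section Defs

variable {G : Type} [AddGroup G] [DecidableEq G]
variable {A : Type} [Ring A]
variable {M : Type} [AddCommGroup M] [Module A M]

/-- The additive subgroup of `M` consisting of finite sums of products `a • m`
with `a ∈ S` and `m ∈ N`. -/
def prodSMul (S : AddSubgroup A) (N : AddSubgroup M) : AddSubgroup M where
  __ := S.toAddSubmonoid • N.toAddSubmonoid
  neg_mem' {x} hx := by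
    refine AddSubmonoid.smul_induction_on hx (fun a ha m hm => ?_) (fun x y hx hy => ?_)
    · rw [show -(a • m) = (-a) • m by rw [neg_smul]]
      exact AddSubmonoid.smul_mem_smul (S.neg_mem ha) hm
    · rw [neg_add]
      exact (S.toAddSubmonoid • N.toAddSubmonoid).add_mem hx hy

/-- A (possibly non-unital) ring, here an additive subgroup of `A` closed under
multiplication, is *s-unital* if every element has a left and a right local unit in it. -/
def IsSUnitalSub (I : AddSubgroup A) : Prop :=
  ∀ a ∈ I, ∃ u ∈ I, ∃ v ∈ I, u * a = a ∧ a * v = a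

variable (𝒜 : G → AddSubgroup A)

/-- `S` is symmetrically graded if `S_g S_{g⁻¹} S_g = S_g` for all `g`. -/
def IsSymmetricallyGraded : Prop := ∀ g : G, 𝒜 g * 𝒜 (-g) * 𝒜 g = 𝒜 g

/-- `S` is nearly epsilon-strongly graded if each `S_g` is an s-unital
`(S_g S_{g⁻¹}, S_{g⁻¹} S_g)`-bimodule: for every `s ∈ S_g` there are
`u ∈ S_g S_{g⁻¹}` and `v ∈ S_{g⁻¹} S_g` with `u s = s = s v`. -/
def IsNearlyEpsilonStrong : Prop :=
  ∀ g : G, ∀ s ∈ 𝒜 g, ∃ u ∈ 𝒜 g * 𝒜 (-g), ∃ v ∈ 𝒜 (-g) * 𝒜 g, u * s = s ∧ s * v = s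


section EpsilonCentral

variable {G : Type} [AddGroup G] [DecidableEq G]
variable {A : Type} [Ring A]

/-- `r` is an epsilon-central element for the family `ε`: a minimal nonzero element of
the boolean semigroup generated by `{ε_g : g ∈ G}` that is central in `S`. -/
def IsEpsilonCentral (ε : G → A) (r : A) : Prop :=
  r ∈ Subsemigroup.closure (Set.range ε) ∧ r ≠ 0 ∧
    (∀ a ∈ Subsemigroup.closure (Set.range ε), a ≠ 0 → a * r = a → a = r) ∧
    ∀ x : A, r * x = x * r

/-- The image `e S_g` of a homogeneous component under left multiplication by `e`. -/
def cornerComponent (e : A) (S : AddSubgroup A) : AddSubgroup A :=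
  S.map (AddMonoidHom.mulLeft e)

end EpsilonCentral

end Defs

theorem Subsemigroup.isIdempotentElem_of_mem_closure {M : Type*} [Semigroup M] {s : Set M}
    (hidem : ∀ a ∈ s, IsIdempotentElem a) (hcomm : ∀ a ∈ s, ∀ b ∈ s, a * b = b * a)
    {x : M} (hx : x ∈ closure s) : IsIdempotentElem x := by
  induction hx using Subsemigroup.closure_induction with
  | mem a ha => exact hidem a ha
  | mul a b ha hb iha ihb =>
    have hcomm' := Set.centralizer_centralizer_comm_of_comm hcomm
    exact iha.mul_of_commute (hcomm' a (closure_le_centralizer_centralizer s ha)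
      b (closure_le_centralizer_centralizer s hb)) ihb

section Graded

variable {ι A : Type*} [Ring A] (𝒜 : ι → AddSubgroup A)

theorem AddSubgroup.mul_le_graded [Add ι] [SetLike.GradedMul 𝒜] (i j : ι) :
    𝒜 i * 𝒜 j ≤ 𝒜 (i + j) :=
  (AddSubmonoid.mul_le (P := (𝒜 (i + j)).toAddSubmonoid)).2 fun _ ha _ hb =>
    SetLike.mul_mem_graded (A := 𝒜) ha hb

theorem AddSubgroup.mul_mul_le_mul_graded [Add ι] [SetLike.GradedMul 𝒜] (i j k : ι) :
    𝒜 i * 𝒜 j * 𝒜 k ≤ 𝒜 i * 𝒜 (j + k) := by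
  show (𝒜 i).toAddSubmonoid * (𝒜 j).toAddSubmonoid * (𝒜 k).toAddSubmonoid
    ≤ (𝒜 i).toAddSubmonoid * (𝒜 (j + k)).toAddSubmonoid
  rw [mul_assoc]
  exact AddSubmonoid.mul_le_mul le_rfl (AddSubgroup.mul_le_graded 𝒜 j k)

theorem AddSubgroup.mul_mul_le_graded_mul [Add ι] [SetLike.GradedMul 𝒜] (i j k : ι) :
    𝒜 i * (𝒜 j * 𝒜 k) ≤ 𝒜 (i + j) * 𝒜 k := by
  show (𝒜 i).toAddSubmonoid * ((𝒜 j).toAddSubmonoid * (𝒜 k).toAddSubmonoid)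
    ≤ (𝒜 (i + j)).toAddSubmonoid * (𝒜 k).toAddSubmonoid
  rw [← mul_assoc]
  exact AddSubmonoid.mul_le_mul (AddSubgroup.mul_le_graded 𝒜 i j) le_rfl

end Graded

section Corner

variable {A : Type} [Ring A] {e : A}

theorem cornerComponent_mul (he : IsIdempotentElem e) (hcen : ∀ x, Commute e x)
    (S T : AddSubgroup A) :
    cornerComponent e S * cornerComponent e T = cornerComponent e (S * T) := by
  have mul_corner : ∀ a b, e * a * (e * b) = e * (a * b) := fun a b => by
    rw [mul_assoc, ← mul_assoc a, ← (hcen a).eq, mul_assoc, ← mul_assoc, he.eq]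
  apply le_antisymm
  · refine AddSubmonoid.mul_le.2 ?_
    rintro _ ⟨a, ha, rfl⟩ _ ⟨b, hb, rfl⟩
    exact ⟨a * b, AddSubmonoid.mul_mem_mul ha hb, (mul_corner a b).symm⟩
  · rintro _ ⟨c, hc, rfl⟩
    refine AddSubmonoid.mul_induction_on hc (fun a ha b hb => ?_) (fun x y hx hy => ?_)
    · show e * (a * b) ∈ _
      rw [← mul_corner]
      exact AddSubmonoid.mul_mem_mul ⟨a, ha, rfl⟩ ⟨b, hb, rfl⟩
    · show e * (x + y) ∈ _
      rw [mul_add]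
      exact add_mem hx hy

end Corner

section EpsilonStrong

variable {G A : Type*} [AddGroup G] [Ring A] (𝒜 : G → AddSubgroup A) {ε : G → A}

theorem eps_mul_of_mem_mul_neg (hunit : ∀ g : G, ∀ s ∈ 𝒜 g, ε g * s = s ∧ s * ε (-g) = s)
    {g : G} {z : A} (hz : z ∈ 𝒜 g * 𝒜 (-g)) : ε g * z = z := by
  refine AddSubmonoid.mul_induction_on hz (fun x hx y _ => ?_) (fun x y hx hy => ?_)
  · rw [← mul_assoc, (hunit g x hx).1]
  · rw [mul_add, hx, hy]

theorem mul_eps_of_mem_mul_neg (hunit : ∀ g : G, ∀ s ∈ 𝒜 g, ε g * s = s ∧ s * ε (-g) = s)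
    {g : G} {z : A} (hz : z ∈ 𝒜 g * 𝒜 (-g)) : z * ε g = z := by
  refine AddSubmonoid.mul_induction_on hz (fun x _ y hy => ?_) (fun x y hx hy => ?_)
  · have hy' := (hunit (-g) y hy).2
    rw [neg_neg] at hy'
    rw [mul_assoc, hy']
  · rw [add_mul, hx, hy]

variable [SetLike.GradedMul 𝒜]

theorem eps_mem_zero (hmem : ∀ g : G, ε g ∈ 𝒜 g * 𝒜 (-g)) (g : G) : ε g ∈ 𝒜 0 :=
  add_neg_cancel g ▸ AddSubgroup.mul_le_graded 𝒜 g (-g) (hmem g)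

theorem eps_commute_of_mem_zero (hmem : ∀ g : G, ε g ∈ 𝒜 g * 𝒜 (-g))
    (hunit : ∀ g : G, ∀ s ∈ 𝒜 g, ε g * s = s ∧ s * ε (-g) = s) (g : G) {w : A}
    (hw : w ∈ 𝒜 0) : Commute (ε g) w := by
  have hright : ε g * w ∈ 𝒜 g * 𝒜 (-g) := by
    simpa only [add_zero] using AddSubgroup.mul_mul_le_mul_graded 𝒜 g (-g) 0
      (AddSubmonoid.mul_mem_mul (hmem g) hw)
  have hleft : w * ε g ∈ 𝒜 g * 𝒜 (-g) := by
    simpa only [zero_add] using AddSubgroup.mul_mul_le_graded_mul 𝒜 0 g (-g)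
      (AddSubmonoid.mul_mem_mul hw (hmem g))
  calc ε g * w = ε g * w * ε g := (mul_eps_of_mem_mul_neg 𝒜 hunit hright).symm
    _ = ε g * (w * ε g) := mul_assoc _ _ _
    _ = w * ε g := eps_mul_of_mem_mul_neg 𝒜 hunit hleft

theorem isIdempotentElem_of_mem_closure_range_eps (hmem : ∀ g : G, ε g ∈ 𝒜 g * 𝒜 (-g))
    (hunit : ∀ g : G, ∀ s ∈ 𝒜 g, ε g * s = s ∧ s * ε (-g) = s) {e : A}
    (he : e ∈ Subsemigroup.closure (Set.range ε)) : IsIdempotentElem e := by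
  refine Subsemigroup.isIdempotentElem_of_mem_closure ?_ ?_ he
  · rintro _ ⟨g, rfl⟩
    exact eps_mul_of_mem_mul_neg 𝒜 hunit (hmem g)
  · rintro _ ⟨g, rfl⟩ _ ⟨h, rfl⟩
    exact eps_commute_of_mem_zero 𝒜 hmem hunit g (eps_mem_zero 𝒜 hmem h)

theorem eps_mul_mem_mul (hmem : ∀ g : G, ε g ∈ 𝒜 g * 𝒜 (-g)) {g h : G} {c : A}
    (hc : c ∈ 𝒜 (g + h)) : ε g * c ∈ 𝒜 g * 𝒜 h := by
  simpa only [neg_add_cancel_left] using AddSubgroup.mul_mul_le_mul_graded 𝒜 g (-g) (g + h)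
    (AddSubmonoid.mul_mem_mul (hmem g) hc)

end EpsilonStrong

theorem corner_strongly_graded_of_epsilonCentral
    {G : Type} [AddGroup G] [DecidableEq G]
    {A : Type} [Ring A] (𝒜 : G → AddSubgroup A) [GradedRing 𝒜]
    (ε : G → A)
    (hmem : ∀ g : G, ε g ∈ 𝒜 g * 𝒜 (-g))
    (hunit : ∀ g : G, ∀ s ∈ 𝒜 g, ε g * s = s ∧ s * ε (-g) = s)
    (e : A) (he : IsEpsilonCentral ε e)
    (g h : G) (hg : e * ε g = e) :
    cornerComponent e (𝒜 g) * cornerComponent e (𝒜 h)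
      = cornerComponent e (𝒜 (g + h)) := by
  obtain ⟨he_mem, -, -, he_central⟩ := he
  have he_idem := isIdempotentElem_of_mem_closure_range_eps 𝒜 hmem hunit he_mem
  rw [cornerComponent_mul he_idem he_central]
  refine le_antisymm (AddSubgroup.map_mono (AddSubgroup.mul_le_graded 𝒜 g h)) ?_
  rintro _ ⟨c, hc, rfl⟩
  refine ⟨ε g * c, eps_mul_mem_mul 𝒜 hmem hc, ?_⟩
  show e * (ε g * c) = e * c
  rw [← mul_assoc, hg]
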